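/- Let H be a real inner product space, v₁, …, v_T ∈ H, σ > 0, and let K be the T×T Gram matrix with entries K_{ij} = ⟨v_i, v_j⟩. Fix w, w' ∈ H and set y = (⟨w, v_t⟩)_{t≤T}, y' = (⟨w', v_t⟩)_{t≤T}. For x ∈ H define k(x) = (⟨v_t, x⟩)_{t≤T}, μ(x) = k(x)ᵀ (K + σ²I)⁻¹ (y − y') + ⟨w', x⟩, and s(x)² = ‖x‖² − k(x)ᵀ (K + σ²I)⁻¹ k(x). Then for every x ∈ H, s(x)² ≥ 0 and |⟨w, x⟩ − μ(x)| ≤ ‖w − w'‖ · √(s(x)²). -/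

import Mathlib

/-!
Let `K = G + ρ I` (`ρ = σ²`) with `G` the Gram matrix of `v`, let `α = K⁻¹ k(x)` and let
`r = x - ∑ₜ αₜ vₜ` be the residual of `x`. Since `G α = k(∑ₜ αₜ vₜ)`, the defining equation
`K α = k(x)` says `k(r) = ρ α`. Consequently `‖x‖² - k(x)ᵀ K⁻¹ k(x) = ⟪x, r⟫ = ‖r‖² + ρ ‖α‖²`
is nonnegative and dominates `‖r‖²`, while the symmetry of `K⁻¹` turns the error of the
posterior mean into `⟪w - w', r⟫`; Cauchy–Schwarz finishes the proof.
-/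

open scoped RealInnerProductSpace Matrix

noncomputable def gram {H : Type*} [NormedAddCommGroup H] [InnerProductSpace ℝ H]
    {T : ℕ} (v : Fin T → H) : Matrix (Fin T) (Fin T) ℝ :=
  Matrix.of fun i j => ⟪v i, v j⟫

noncomputable def kvec {H : Type*} [NormedAddCommGroup H] [InnerProductSpace ℝ H]
    {T : ℕ} (v : Fin T → H) (x : H) : Fin T → ℝ :=
  fun i => ⟪v i, x⟫

section

variable {H : Type*} [NormedAddCommGroup H] [InnerProductSpace ℝ H] {T : ℕ} (v : Fin T → H)

noncomputable def regWeights (ρ : ℝ) (x : H) : Fin T → ℝ :=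
  (gram v + ρ • (1 : Matrix (Fin T) (Fin T) ℝ))⁻¹ *ᵥ kvec v x

noncomputable def regResidual (ρ : ℝ) (x : H) : H :=
  x - ∑ t, regWeights v ρ x t • v t

lemma kvec_sub (x y : H) : kvec v (x - y) = kvec v x - kvec v y := by
  ext i
  simp [kvec, inner_sub_right]

lemma dotProduct_kvec (c : Fin T → ℝ) (x : H) : c ⬝ᵥ kvec v x = ⟪∑ t, c t • v t, x⟫ := by
  simp [dotProduct, kvec, sum_inner, real_inner_smul_left]

lemma kvec_sum_smul (c : Fin T → ℝ) : kvec v (∑ t, c t • v t) = gram v *ᵥ c := by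
  ext i
  simp [kvec, gram, Matrix.mulVec, dotProduct, inner_sum, real_inner_smul_right, mul_comm]

lemma posDef_gram_add_smul_one {ρ : ℝ} (hρ : 0 < ρ) :
    (gram v + ρ • (1 : Matrix (Fin T) (Fin T) ℝ)).PosDef :=
  Matrix.PosDef.posSemidef_add (Matrix.posSemidef_gram ℝ v) (Matrix.PosDef.one.smul hρ)

lemma kvec_regResidual {ρ : ℝ} (hK : IsUnit (gram v + ρ • (1 : Matrix (Fin T) (Fin T) ℝ)).det)
    (x : H) : kvec v (regResidual v ρ x) = ρ • regWeights v ρ x := by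
  have hα : (gram v + ρ • 1) *ᵥ regWeights v ρ x = kvec v x := by
    rw [regWeights, Matrix.mulVec_mulVec, Matrix.mul_nonsing_inv _ hK, Matrix.one_mulVec]
  rw [Matrix.add_mulVec, Matrix.smul_mulVec, Matrix.one_mulVec] at hα
  rw [regResidual, kvec_sub, kvec_sum_smul, ← hα]
  abel

lemma sq_norm_sub_kvec_dotProduct_regWeights {ρ : ℝ}
    (hK : IsUnit (gram v + ρ • (1 : Matrix (Fin T) (Fin T) ℝ)).det) (x : H) :
    ‖x‖ ^ 2 - kvec v x ⬝ᵥ regWeights v ρ x =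
      ‖regResidual v ρ x‖ ^ 2 + ρ * (regWeights v ρ x ⬝ᵥ regWeights v ρ x) := by
  set r := regResidual v ρ x
  have hx : x = r + ∑ t, regWeights v ρ x t • v t := by simp [r, regResidual]
  calc ‖x‖ ^ 2 - kvec v x ⬝ᵥ regWeights v ρ x = ⟪r, x⟫ := by
        rw [dotProduct_comm, dotProduct_kvec, ← real_inner_self_eq_norm_sq, ← inner_sub_left]
        rfl
    _ = ‖r‖ ^ 2 + regWeights v ρ x ⬝ᵥ kvec v r := by
        rw [dotProduct_kvec, ← real_inner_self_eq_norm_sq, real_inner_comm _ r, ← inner_add_left,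
          ← hx]
    _ = ‖r‖ ^ 2 + ρ * (regWeights v ρ x ⬝ᵥ regWeights v ρ x) := by
        rw [kvec_regResidual v hK, dotProduct_smul, smul_eq_mul]

lemma inner_sub_kvec_dotProduct_inv_mulVec_kvec (ρ : ℝ) (u x : H) :
    ⟪u, x⟫ - kvec v x ⬝ᵥ ((gram v + ρ • (1 : Matrix (Fin T) (Fin T) ℝ))⁻¹ *ᵥ kvec v u) =
      ⟪u, regResidual v ρ x⟫ := by
  have hsymm : (gram v + ρ • (1 : Matrix (Fin T) (Fin T) ℝ))⁻¹ᵀ =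
      (gram v + ρ • (1 : Matrix (Fin T) (Fin T) ℝ))⁻¹ :=
    ((Matrix.isHermitian_gram ℝ v).add (Matrix.isHermitian_one.smul (.all ρ))).inv
  rw [Matrix.dotProduct_mulVec, ← Matrix.mulVec_transpose, hsymm, ← regWeights, dotProduct_kvec,
    real_inner_comm u, ← inner_sub_right, regResidual]

end

/-- **Noise-regularized Gaussian-process confidence bound with prior mean `⟪w', ·⟫`.**
With `μ(x) = k(x)ᵀ (K + σ²I)⁻¹ (y - y') + ⟪w', x⟫` and
`s(x)² = ‖x‖² - k(x)ᵀ (K + σ²I)⁻¹ k(x)`, one has `s(x)² ≥ 0` and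
`|⟪w, x⟫ - μ(x)| ≤ ‖w - w'‖ √(s(x)²)`. -/
theorem noisy_confidence_bound {H : Type*} [NormedAddCommGroup H] [InnerProductSpace ℝ H]
    (T : ℕ) (v : Fin T → H) (σ : ℝ) (hσ : 0 < σ) (w w' : H) (x : H) :
    let K : Matrix (Fin T) (Fin T) ℝ := gram v + σ ^ 2 • (1 : Matrix (Fin T) (Fin T) ℝ)
    let y : Fin T → ℝ := fun t => ⟪w, v t⟫
    let y' : Fin T → ℝ := fun t => ⟪w', v t⟫
    let μ : ℝ := kvec v x ⬝ᵥ (K⁻¹ *ᵥ (y - y')) + ⟪w', x⟫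
    let s2 : ℝ := ‖x‖ ^ 2 - kvec v x ⬝ᵥ (K⁻¹ *ᵥ kvec v x)
    0 ≤ s2 ∧ |⟪w, x⟫ - μ| ≤ ‖w - w'‖ * Real.sqrt s2 := by
  intro K y y' μ s2
  have hK : IsUnit K.det :=
    (Matrix.isUnit_iff_isUnit_det K).mp (posDef_gram_add_smul_one v (pow_pos hσ 2)).isUnit
  set r := regResidual v (σ ^ 2) x
  have hs2 : s2 = ‖r‖ ^ 2 + σ ^ 2 * (regWeights v (σ ^ 2) x ⬝ᵥ regWeights v (σ ^ 2) x) :=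
    sq_norm_sub_kvec_dotProduct_regWeights v hK x
  have hpenalty : 0 ≤ σ ^ 2 * (regWeights v (σ ^ 2) x ⬝ᵥ regWeights v (σ ^ 2) x) :=
    mul_nonneg (sq_nonneg σ) (dotProduct_star_self_nonneg _)
  have hr : ‖r‖ ≤ √s2 := Real.le_sqrt_of_sq_le (hs2 ▸ le_add_of_nonneg_right hpenalty)
  have hdev : ⟪w, x⟫ - μ = ⟪w - w', r⟫ := by
    have hy : y - y' = kvec v (w - w') := by
      ext t
      simp [y, y', kvec, inner_sub_right, real_inner_comm]
    rw [← inner_sub_kvec_dotProduct_inv_mulVec_kvec, ← hy, inner_sub_left]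
    ring
  refine ⟨hs2 ▸ add_nonneg (sq_nonneg _) hpenalty, ?_⟩
  rw [hdev]
  exact (abs_real_inner_le_norm _ _).trans (by gcongr)
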